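/- In ℂ^{d₁}⊗ℂ^{d₂} with min(d₁,d₂) = 2, every unextendible product basis is a complete basis; equivalently, any set of pairwise orthogonal product vectors spanning a proper subspace of ℂ²⊗ℂ^{d} admits a nonzero product vector orthogonal to all of them. -/

import Mathlib

noncomputable section
open scoped InnerProductSpace

def e {n : ℕ} (i : Fin n) : EuclideanSpace ℂ (Fin n) := EuclideanSpace.single i 1

def tp {m n : ℕ} (a : EuclideanSpace ℂ (Fin m)) (b : EuclideanSpace ℂ (Fin n)) :
    EuclideanSpace ℂ (Fin m × Fin n) := WithLp.toLp 2 (fun p : Fin m × Fin n => a p.1 * b p.2)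

lemma inner_tp {m n : ℕ} (a x : EuclideanSpace ℂ (Fin m)) (b y : EuclideanSpace ℂ (Fin n)) :
    (inner ℂ (tp a b) (tp x y) : ℂ) = (inner ℂ a x : ℂ) * (inner ℂ b y : ℂ) := by
  simp only [tp, PiLp.inner_apply, RCLike.inner_apply]
  rw [Finset.sum_mul_sum, Fintype.sum_prod_type]
  congr 1; ext i; congr 1; ext j; simp [map_mul]; ring

lemma tp_eq_zero {m n : ℕ} {a : EuclideanSpace ℂ (Fin m)} {b : EuclideanSpace ℂ (Fin n)}
    (h : tp a b = 0) : a = 0 ∨ b = 0 := by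
  by_contra hc
  push_neg at hc
  obtain ⟨k, hk⟩ : ∃ k, a k ≠ 0 := by
    by_contra h'; push_neg at h'; exact hc.1 (PiLp.ext fun k => by simp [h'])
  obtain ⟨l, hl⟩ : ∃ l, b l ≠ 0 := by
    by_contra h'; push_neg at h'; exact hc.2 (PiLp.ext fun k => by simp [h'])
  have := congrArg (fun v => v (k, l)) h
  exact (mul_ne_zero hk hl) this

lemma tp_ne_zero {m n : ℕ} {a : EuclideanSpace ℂ (Fin m)} {b : EuclideanSpace ℂ (Fin n)}
    (ha : a ≠ 0) (hb : b ≠ 0) : tp a b ≠ 0 := by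
  intro h; rcases tp_eq_zero h with h' | h' <;> [exact ha h'; exact hb h']

def Jmap (a : EuclideanSpace ℂ (Fin 2)) : EuclideanSpace ℂ (Fin 2) :=
  WithLp.toLp 2 (fun k => if k = 0 then -(starRingEnd ℂ) (a 1) else (starRingEnd ℂ) (a 0))

lemma Jmap_zero (a : EuclideanSpace ℂ (Fin 2)) : Jmap a 0 = -(starRingEnd ℂ) (a 1) := rfl
lemma Jmap_one (a : EuclideanSpace ℂ (Fin 2)) : Jmap a 1 = (starRingEnd ℂ) (a 0) := rfl

lemma inner_J_self (a : EuclideanSpace ℂ (Fin 2)) : (inner ℂ a (Jmap a) : ℂ) = 0 := by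
  simp [PiLp.inner_apply, RCLike.inner_apply, Fin.sum_univ_two, Jmap_zero, Jmap_one]
  ring

lemma Jmap_ne_zero {a : EuclideanSpace ℂ (Fin 2)} (ha : a ≠ 0) : Jmap a ≠ 0 := by
  intro h
  apply ha
  have h0 := congrArg (fun v => v 0) h
  have h1 := congrArg (fun v => v 1) h
  simp [Jmap_zero, Jmap_one] at h0 h1
  ext k
  fin_cases k <;> simp [h0, h1]

lemma Jmap_Jmap (a : EuclideanSpace ℂ (Fin 2)) : Jmap (Jmap a) = -a := by
  ext k
  fin_cases k <;> simp [Jmap, EuclideanSpace]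

lemma perp_eq_smul_J {c x : EuclideanSpace ℂ (Fin 2)} (hc : c ≠ 0)
    (hx : (inner ℂ c x : ℂ) = 0) : ∃ l : ℂ, x = l • Jmap c := by
  simp only [PiLp.inner_apply, RCLike.inner_apply, Fin.sum_univ_two] at hx
  have hc' : c 0 ≠ 0 ∨ c 1 ≠ 0 := by
    by_contra h; push_neg at h
    exact hc (PiLp.ext fun k => by fin_cases k <;> simp [h.1, h.2])
  rcases eq_or_ne (c 0) 0 with h0 | h0
  · have hc1 : c 1 ≠ 0 := by tauto
    have hx1 : x 1 = 0 := by
      simp [h0] at hx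
      tauto
    refine ⟨x 0 / (-(starRingEnd ℂ) (c 1)), PiLp.ext fun k => ?_⟩
    fin_cases k <;> simp [Jmap_zero, Jmap_one, h0, hx1]
    · have h1 : (starRingEnd ℂ) (c 1) ≠ 0 := by simpa using hc1
      field_simp
  · refine ⟨x 1 / (starRingEnd ℂ) (c 0), PiLp.ext fun k => ?_⟩
    have hc0 : (starRingEnd ℂ) (c 0) ≠ 0 := by simpa using h0
    fin_cases k <;> simp [Jmap_zero, Jmap_one]
    · field_simp
      have : (starRingEnd ℂ) (c 0) * x 0 = - ((starRingEnd ℂ) (c 1) * x 1) := by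
        linear_combination hx
      linear_combination this
    · field_simp

variable {F : Type*} [NormedAddCommGroup F] [InnerProductSpace ℂ F]

lemma lin_indep_orth {ι : Type*} {v : ι → F}
    (hnz : ∀ i, v i ≠ 0) (ho : ∀ i j, i ≠ j → (inner ℂ (v i) (v j) : ℂ) = 0) :
    LinearIndependent ℂ v := by
  rw [linearIndependent_iff']
  intro s g hsum i hi
  have h := congrArg (fun w => (inner ℂ (v i) w : ℂ)) hsum
  simp only [inner_sum, inner_smul_right, inner_zero_right] at h
  rw [Finset.sum_eq_single i (fun j _ hji => by rw [ho i j (Ne.symm hji), mul_zero])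
    (fun h' => absurd hi h')] at h
  rcases mul_eq_zero.mp h with h' | h'
  · exact h'
  · exact absurd (inner_self_eq_zero.mp h') (hnz i)

lemma inner_span_zero {T : Set F} {w : F}
    (h : ∀ t ∈ T, (inner ℂ t w : ℂ) = 0) : ∀ v ∈ Submodule.span ℂ T, (inner ℂ v w : ℂ) = 0 := by
  intro v hv
  induction hv using Submodule.span_induction with
  | mem x hx => exact h x hx
  | zero => exact inner_zero_left w
  | add x y _ _ hx hy => rw [inner_add_left, hx, hy, add_zero]
  | smul c x _ hx => rw [inner_smul_left, hx, mul_zero]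

lemma span_orth_span {T S : Set F} (h : ∀ t ∈ T, ∀ u ∈ S, (inner ℂ t u : ℂ) = 0) :
    ∀ v ∈ Submodule.span ℂ T, ∀ w ∈ Submodule.span ℂ S, (inner ℂ v w : ℂ) = 0 := by
  intro v hv w hw
  have : ∀ u ∈ S, (inner ℂ u v : ℂ) = 0 := fun u hu =>
    inner_eq_zero_symm.mp (inner_span_zero (fun t ht => h t ht u hu) v hv)
  exact inner_eq_zero_symm.mp (inner_span_zero this w hw)

lemma span_disjoint {T S : Set F} (h : ∀ t ∈ T, ∀ u ∈ S, (inner ℂ t u : ℂ) = 0) :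
    Submodule.span ℂ T ⊓ Submodule.span ℂ S = ⊥ := by
  rw [Submodule.eq_bot_iff]
  rintro z ⟨hzT, hzS⟩
  exact inner_self_eq_zero.mp (span_orth_span h z hzT z hzS)

lemma finrank_span_orth {ι : Type*} (t : Finset ι) (b : ι → F)
    (hnz : ∀ i ∈ t, b i ≠ 0) (ho : ∀ i ∈ t, ∀ j ∈ t, i ≠ j → (inner ℂ (b i) (b j) : ℂ) = 0) :
    Module.finrank ℂ (Submodule.span ℂ (b '' t)) = t.card := by
  have hli : LinearIndependent ℂ (fun i : t => b i) :=
    lin_indep_orth (fun i => hnz i i.2)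
      (fun i j hij => ho i i.2 j j.2 (fun h' => hij (Subtype.ext h')))
  have himg : b '' ↑t = Set.range (fun i : t => b i) := (Set.image_eq_range b ↑t)
  rw [himg, finrank_span_eq_card hli, Fintype.card_coe]

lemma smul_inner_ne_zero {c : EuclideanSpace ℂ (Fin 2)} (hc : c ≠ 0) {l m : ℂ}
    (hl : l ≠ 0) (hm : m ≠ 0) : (inner ℂ (l • c) (m • c) : ℂ) ≠ 0 := by
  rw [inner_smul_left, inner_smul_right]
  exact mul_ne_zero (by simpa using hl)
    (mul_ne_zero hm (fun h => hc (inner_self_eq_zero.mp h)))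

lemma par_of_perp_J {c x : EuclideanSpace ℂ (Fin 2)} (hc : c ≠ 0) (hx : x ≠ 0)
    (h : (inner ℂ x (Jmap c) : ℂ) = 0) : ∃ l : ℂ, l ≠ 0 ∧ x = l • c := by
  obtain ⟨l, hl⟩ := perp_eq_smul_J (Jmap_ne_zero hc) (inner_eq_zero_symm.mp h)
  rw [Jmap_Jmap] at hl
  refine ⟨-l, fun h0 => hx ?_, by rw [hl, smul_neg, neg_smul]⟩
  rw [hl, neg_eq_zero.mp h0, zero_smul]

lemma par_of_perp {c x : EuclideanSpace ℂ (Fin 2)} (hc : c ≠ 0) (hx : x ≠ 0)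
    (h : (inner ℂ x c : ℂ) = 0) : ∃ l : ℂ, l ≠ 0 ∧ x = l • Jmap c := by
  obtain ⟨l, hl⟩ := perp_eq_smul_J hc (inner_eq_zero_symm.mp h)
  refine ⟨l, fun h0 => hx ?_, hl⟩
  rw [hl, h0, zero_smul]

lemma key {d : ℕ} {ι : Type} (a : ι → EuclideanSpace ℂ (Fin 2))
    (b : ι → EuclideanSpace ℂ (Fin d))
    (ha : ∀ i, a i ≠ 0) (hb : ∀ i, b i ≠ 0)
    (ho : ∀ i j, i ≠ j → (inner ℂ (a i) (a j) : ℂ) ≠ 0 → (inner ℂ (b i) (b j) : ℂ) = 0)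
    (s : Finset ι)
    (H : ∀ x : EuclideanSpace ℂ (Fin 2), x ≠ 0 →
      Submodule.span ℂ (b '' {i | i ∈ s ∧ (inner ℂ (a i) x : ℂ) ≠ 0})
        = Submodule.span ℂ (b '' ↑s)) :
    2 * Module.finrank ℂ (Submodule.span ℂ (b '' ↑s)) ≤ s.card := by
  classical
  induction s using Finset.strongInduction with
  | _ s IH =>
  rcases s.eq_empty_or_nonempty with rfl | ⟨i₀, hi₀⟩
  · simp
  set c := a i₀ with hc_def
  have hc : c ≠ 0 := ha i₀
  have hJc : Jmap c ≠ 0 := Jmap_ne_zero hc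
  set A := s.filter (fun i => (inner ℂ (a i) (Jmap c) : ℂ) = 0) with hA_def
  set B := s.filter (fun i => (inner ℂ (a i) c : ℂ) = 0) with hB_def
  set R := s.filter (fun i => (inner ℂ (a i) (Jmap c) : ℂ) ≠ 0 ∧ (inner ℂ (a i) c : ℂ) ≠ 0)
    with hR_def
  have hparA : ∀ i ∈ A, ∃ l : ℂ, l ≠ 0 ∧ a i = l • c := fun i hi =>
    par_of_perp_J hc (ha i) (Finset.mem_filter.mp hi).2
  have hparB : ∀ i ∈ B, ∃ l : ℂ, l ≠ 0 ∧ a i = l • Jmap c := fun i hi =>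
    par_of_perp hc (ha i) (Finset.mem_filter.mp hi).2
  -- inner ℂ products with c / Jmap c are nonzero on A / B
  have hAc : ∀ i ∈ A, (inner ℂ (a i) c : ℂ) ≠ 0 := by
    intro i hi
    obtain ⟨l, hl, hal⟩ := hparA i hi
    rw [hal, inner_smul_left]
    exact mul_ne_zero (by simpa using hl) (fun h => hc (inner_self_eq_zero.mp h))
  have hBJc : ∀ i ∈ B, (inner ℂ (a i) (Jmap c) : ℂ) ≠ 0 := by
    intro i hi
    obtain ⟨l, hl, hal⟩ := hparB i hi
    rw [hal, inner_smul_left]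
    exact mul_ne_zero (by simpa using hl) (fun h => hJc (inner_self_eq_zero.mp h))
  -- b-orthogonality
  have hbAA : ∀ i ∈ A, ∀ j ∈ A, i ≠ j → (inner ℂ (b i) (b j) : ℂ) = 0 := by
    intro i hi j hj hij
    obtain ⟨l, hl, hal⟩ := hparA i hi
    obtain ⟨m, hm, ham⟩ := hparA j hj
    exact ho i j hij (by rw [hal, ham]; exact smul_inner_ne_zero hc hl hm)
  have hbBB : ∀ i ∈ B, ∀ j ∈ B, i ≠ j → (inner ℂ (b i) (b j) : ℂ) = 0 := by
    intro i hi j hj hij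
    obtain ⟨l, hl, hal⟩ := hparB i hi
    obtain ⟨m, hm, ham⟩ := hparB j hj
    exact ho i j hij (by rw [hal, ham]; exact smul_inner_ne_zero hJc hl hm)
  have hbAR : ∀ i ∈ A, ∀ j ∈ R, (inner ℂ (b i) (b j) : ℂ) = 0 := by
    intro i hi j hj
    have hjR := (Finset.mem_filter.mp hj).2
    have hij : i ≠ j := fun h => hjR.1 (h ▸ (Finset.mem_filter.mp hi).2)
    obtain ⟨l, hl, hal⟩ := hparA i hi
    refine ho i j hij ?_
    rw [hal, inner_smul_left]
    exact mul_ne_zero (by simpa using hl) (inner_eq_zero_symm.not.mp hjR.2)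
  have hbBR : ∀ i ∈ B, ∀ j ∈ R, (inner ℂ (b i) (b j) : ℂ) = 0 := by
    intro i hi j hj
    have hjR := (Finset.mem_filter.mp hj).2
    have hij : i ≠ j := fun h => hjR.2 (h ▸ (Finset.mem_filter.mp hi).2)
    obtain ⟨l, hl, hal⟩ := hparB i hi
    refine ho i j hij ?_
    rw [hal, inner_smul_left]
    exact mul_ne_zero (by simpa using hl) (inner_eq_zero_symm.not.mp hjR.1)
  -- set identities
  have hsetJ : {i | i ∈ s ∧ (inner ℂ (a i) (Jmap c) : ℂ) ≠ 0} = (↑B ∪ ↑R : Set ι) := by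
    ext i
    simp only [Set.mem_setOf_eq, Set.mem_union, Finset.mem_coe, hB_def, hR_def,
      Finset.mem_filter]
    constructor
    · rintro ⟨his, hne⟩
      by_cases h : (inner ℂ (a i) c : ℂ) = 0
      · exact Or.inl ⟨his, h⟩
      · exact Or.inr ⟨his, hne, h⟩
    · rintro (⟨his, h⟩ | ⟨his, h, -⟩)
      · exact ⟨his, hBJc i (Finset.mem_filter.mpr ⟨his, h⟩)⟩
      · exact ⟨his, h⟩
  have hsetc : {i | i ∈ s ∧ (inner ℂ (a i) c : ℂ) ≠ 0} = (↑A ∪ ↑R : Set ι) := by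
    ext i
    simp only [Set.mem_setOf_eq, Set.mem_union, Finset.mem_coe, hA_def, hR_def,
      Finset.mem_filter]
    constructor
    · rintro ⟨his, hne⟩
      by_cases h : (inner ℂ (a i) (Jmap c) : ℂ) = 0
      · exact Or.inl ⟨his, h⟩
      · exact Or.inr ⟨his, h, hne⟩
    · rintro (⟨his, h⟩ | ⟨his, -, h⟩)
      · exact ⟨his, hAc i (Finset.mem_filter.mpr ⟨his, h⟩)⟩
      · exact ⟨his, h⟩
  set VA := Submodule.span ℂ (b '' ↑A) with hVA_def
  set VB := Submodule.span ℂ (b '' ↑B) with hVB_def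
  set VR := Submodule.span ℂ (b '' ↑R) with hVR_def
  set V := Submodule.span ℂ (b '' ↑s) with hV_def
  have hVBR : V = VB ⊔ VR := by
    rw [← H (Jmap c) hJc, hsetJ, Set.image_union, Submodule.span_union]
  have hVAR : V = VA ⊔ VR := by
    rw [← H c hc, hsetc, Set.image_union, Submodule.span_union]
  have hdisjBR : VB ⊓ VR = ⊥ := span_disjoint (by
    rintro _ ⟨i, hi, rfl⟩ _ ⟨j, hj, rfl⟩; exact hbBR i hi j hj)
  have hdisjAR : VA ⊓ VR = ⊥ := span_disjoint (by
    rintro _ ⟨i, hi, rfl⟩ _ ⟨j, hj, rfl⟩; exact hbAR i hi j hj)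
  -- main sub-step
  have main : ∀ (T U : Finset ι), T ⊆ s →
      V = Submodule.span ℂ (b '' ↑U) ⊔ VR →
      (∀ i ∈ T, ∀ j ∈ R, (inner ℂ (b i) (b j) : ℂ) = 0) →
      (∀ i ∈ U, ∀ j ∈ R, (inner ℂ (b i) (b j) : ℂ) = 0) →
      Submodule.span ℂ (b '' ↑T) ≤ Submodule.span ℂ (b '' ↑U) := by
    intro T U hTs hV' hTR hUR
    rw [Submodule.span_le]
    rintro _ ⟨i, hiT, rfl⟩
    have hbiV : b i ∈ V := Submodule.subset_span ⟨i, hTs hiT, rfl⟩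
    rw [hV'] at hbiV
    obtain ⟨u, hu, v, hv, huv⟩ := Submodule.mem_sup.mp hbiV
    have hbiR : ∀ w ∈ VR, (inner ℂ w (b i) : ℂ) = 0 :=
      inner_span_zero (by
        rintro _ ⟨j, hj, rfl⟩
        exact inner_eq_zero_symm.mp (hTR i hiT j hj))
    have hUR' : ∀ w ∈ VR, (inner ℂ w u : ℂ) = 0 := fun w hw =>
      inner_eq_zero_symm.mp (span_orth_span (by
        rintro _ ⟨i', hi', rfl⟩ _ ⟨j, hj, rfl⟩; exact hUR i' hi' j hj) u hu w hw)
    have hv0 : v = 0 := by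
      have h1 : (inner ℂ v (b i) : ℂ) = 0 := hbiR v hv
      rw [← huv, inner_add_right, hUR' v hv, zero_add] at h1
      exact inner_self_eq_zero.mp h1
    rw [← huv, hv0, add_zero]
    exact hu
  have hAB : VA ≤ VB := main A B (Finset.filter_subset _ _) hVBR hbAR hbBR
  have hBA : VB ≤ VA := main B A (Finset.filter_subset _ _) hVAR hbBR hbAR
  -- finranks of class spans
  have hrA : Module.finrank ℂ VA = A.card :=
    finrank_span_orth A b (fun i _ => hb i) hbAA
  have hrB : Module.finrank ℂ VB = B.card :=
    finrank_span_orth B b (fun i _ => hb i) hbBB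
  have hBcard : B.card ≤ A.card := by
    rw [← hrA, ← hrB]; exact Submodule.finrank_mono hBA
  -- restricted hypothesis on R
  have HR : ∀ x : EuclideanSpace ℂ (Fin 2), x ≠ 0 →
      Submodule.span ℂ (b '' {i | i ∈ R ∧ (inner ℂ (a i) x : ℂ) ≠ 0}) = VR := by
    intro x hx
    apply le_antisymm
    · exact Submodule.span_mono (Set.image_mono (fun i hi => hi.1))
    · intro v hv
      set W := Submodule.span ℂ (b '' {i | i ∈ R ∧ (inner ℂ (a i) x : ℂ) ≠ 0}) with hW_def
      have hVle : V ≤ VB ⊔ W := by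
        rw [← H x hx, Submodule.span_le]
        rintro _ ⟨i, ⟨his, hPi⟩, rfl⟩
        by_cases h1 : (inner ℂ (a i) (Jmap c) : ℂ) = 0
        · have : b i ∈ VA := Submodule.subset_span ⟨i, Finset.mem_filter.mpr ⟨his, h1⟩, rfl⟩
          exact Submodule.mem_sup_left (hAB this)
        · by_cases h2 : (inner ℂ (a i) c : ℂ) = 0
          · exact Submodule.mem_sup_left
              (Submodule.subset_span ⟨i, Finset.mem_filter.mpr ⟨his, h2⟩, rfl⟩)
          · refine Submodule.mem_sup_right (Submodule.subset_span ⟨i, ⟨?_, hPi⟩, rfl⟩)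
            exact Finset.mem_filter.mpr ⟨his, h1, h2⟩
      have hvV : v ∈ V := Submodule.span_mono
        (Set.image_mono (by exact_mod_cast Finset.filter_subset _ s)) hv
      obtain ⟨u, hu, w, hw, huw⟩ := Submodule.mem_sup.mp (hVle hvV)
      have hwVR : w ∈ VR := Submodule.span_mono (Set.image_mono (fun i hi => hi.1)) hw
      have huVR : u ∈ VR := by
        have : u = v - w := by rw [← huw]; abel
        rw [this]; exact sub_mem hv hwVR
      have hu0 : u = 0 := by
        have : u ∈ VB ⊓ VR := ⟨hu, huVR⟩
        rwa [hdisjBR, Submodule.mem_bot] at this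
      rw [← huw, hu0, zero_add]
      exact hw
  -- R is a proper subset
  have hRs : R ⊂ s := by
    refine Finset.ssubset_iff_of_subset (Finset.filter_subset _ _) |>.mpr ?_
    exact ⟨i₀, hi₀, fun h => ((Finset.mem_filter.mp h).2).1 (inner_J_self c)⟩
  have hRR := IH R hRs HR
  rw [← hVR_def] at hRR
  -- cardinality of the partition
  have hdisjAB : Disjoint A B := by
    rw [Finset.disjoint_left]
    intro i hiA hiB
    exact hAc i hiA (Finset.mem_filter.mp hiB).2
  have hdisjABR : Disjoint (A ∪ B) R := by
    rw [Finset.disjoint_left]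
    intro i hi hiR
    have hiR' := (Finset.mem_filter.mp hiR).2
    rcases Finset.mem_union.mp hi with h | h
    · exact hiR'.1 (Finset.mem_filter.mp h).2
    · exact hiR'.2 (Finset.mem_filter.mp h).2
  have hcards : A.card + B.card + R.card ≤ s.card := by
    rw [← Finset.card_union_of_disjoint hdisjAB, ← Finset.card_union_of_disjoint hdisjABR]
    apply Finset.card_le_card
    intro i hi
    rcases Finset.mem_union.mp hi with h | h
    · rcases Finset.mem_union.mp h with h' | h' <;> exact Finset.mem_of_mem_filter _ h'
    · exact Finset.mem_of_mem_filter _ h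
  -- finrank of V
  have hVrank : Module.finrank ℂ V = B.card + Module.finrank ℂ VR := by
    have := Submodule.finrank_sup_add_finrank_inf_eq VB VR
    rw [hdisjBR, finrank_bot] at this
    rw [hVBR, ← hrB]
    omega
  rw [hVrank]
  omega

theorem no_upb_in_two_times_d {d : ℕ} (ι : Type)
    (a : ι → EuclideanSpace ℂ (Fin 2)) (b : ι → EuclideanSpace ℂ (Fin d))
    (hnz : ∀ i, tp (a i) (b i) ≠ 0)
    (horth : ∀ i j, i ≠ j → inner ℂ (tp (a i) (b i)) (tp (a j) (b j)) = (0 : ℂ))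
    (hproper : Submodule.span ℂ (Set.range fun i => tp (a i) (b i)) ≠ ⊤) :
    ∃ (x : EuclideanSpace ℂ (Fin 2)) (y : EuclideanSpace ℂ (Fin d)),
      tp x y ≠ 0 ∧ ∀ i, inner ℂ (tp (a i) (b i)) (tp x y) = (0 : ℂ) := by
  by_contra hcon
  push_neg at hcon
  have ha : ∀ i, a i ≠ 0 := fun i h => hnz i (by rw [h]; ext p; simp [tp])
  have hb : ∀ i, b i ≠ 0 := fun i h => hnz i (by rw [h]; ext p; simp [tp])
  have ho : ∀ i j, i ≠ j → (inner ℂ (a i) (a j) : ℂ) ≠ 0 → (inner ℂ (b i) (b j) : ℂ) = 0 := by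
    intro i j hij hne
    have := horth i j hij
    rw [inner_tp] at this
    rcases mul_eq_zero.mp this with h | h
    · exact absurd h hne
    · exact h
  have hli : LinearIndependent ℂ (fun i => tp (a i) (b i)) := lin_indep_orth hnz horth
  have : Finite ι := hli.finite
  have : Fintype ι := Fintype.ofFinite ι
  -- cardinality bound from proper span
  have hfr : Module.finrank ℂ (Submodule.span ℂ (Set.range fun i => tp (a i) (b i)))
      = Fintype.card ι := finrank_span_eq_card hli
  have hlt : Fintype.card ι < 2 * d := by
    have h1 := Submodule.finrank_lt
      (K := ℂ) (V := EuclideanSpace ℂ (Fin 2 × Fin d))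
      hproper
    rw [hfr, finrank_euclideanSpace] at h1
    simpa using h1
  -- unextendibility hypothesis for the key lemma
  have Hspan : ∀ x : EuclideanSpace ℂ (Fin 2), x ≠ 0 →
      Submodule.span ℂ (b '' {i | i ∈ (Finset.univ : Finset ι)
        ∧ (inner ℂ (a i) x : ℂ) ≠ 0}) = ⊤ := by
    intro x hx
    by_contra hW
    set W := Submodule.span ℂ (b '' {i | i ∈ (Finset.univ : Finset ι)
      ∧ (inner ℂ (a i) x : ℂ) ≠ 0}) with hW_def
    have : Wᗮ ≠ ⊥ := fun h => hW (Submodule.orthogonal_eq_bot_iff.mp h)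
    obtain ⟨y, hyW, hy⟩ := Submodule.ne_bot_iff _ |>.mp this
    obtain ⟨i, hi⟩ := hcon x y (tp_ne_zero hx hy)
    apply hi
    rw [inner_tp]
    by_cases h : (inner ℂ (a i) x : ℂ) = 0
    · rw [h, zero_mul]
    · have hbi : b i ∈ W := Submodule.subset_span ⟨i, ⟨Finset.mem_univ i, h⟩, rfl⟩
      rw [(Submodule.mem_orthogonal W y).mp hyW (b i) hbi, mul_zero]
  have hx0 : (EuclideanSpace.single (0 : Fin 2) (1 : ℂ)) ≠ 0 := by
    intro h
    have := congrArg (fun v => v 0) h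
    simp [EuclideanSpace.single_apply] at this
  have hspan_univ : Submodule.span ℂ (b '' ↑(Finset.univ : Finset ι)) = ⊤ := by
    rw [eq_top_iff, ← Hspan _ hx0]
    exact Submodule.span_mono (Set.image_mono (fun i hi => Finset.mem_coe.mpr hi.1))
  have Hkey : ∀ x : EuclideanSpace ℂ (Fin 2), x ≠ 0 →
      Submodule.span ℂ (b '' {i | i ∈ (Finset.univ : Finset ι)
        ∧ (inner ℂ (a i) x : ℂ) ≠ 0})
      = Submodule.span ℂ (b '' ↑(Finset.univ : Finset ι)) := by
    intro x hx
    rw [Hspan x hx, hspan_univ]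
  have hkey := key a b ha hb ho Finset.univ Hkey
  rw [hspan_univ, finrank_top, finrank_euclideanSpace_fin, Finset.card_univ] at hkey
  omega
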